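/- Compiled circuits do not modify bits outside the target, popped ancillas, and no bit of vars(B): if C = compile(B, i) with ancilla heap H and vars(B), H, {i} pairwise disjoint, then every bit modified by C is either i or an ancilla popped from H during compilation; in particular, bits remaining on the heap and bits in vars(B) retain their values under eval C. -/

import Mathlib

inductive BExp where
  | bfalse : BExp
  | btrue : BExp
  | var (i : ℕ) : BExp
  | bxor (a b : BExp) : BExp
  | band (a b : BExp) : BExp

def BExp.eval : BExp → (ℕ → Bool) → Bool
  | .bfalse, _ => false
  | .btrue, _ => true
  | .var i, s => s i
  | .bxor a b, s => xor (a.eval s) (b.eval s)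
  | .band a b, s => (a.eval s) && (b.eval s)

def BExp.vars : BExp → Finset ℕ
  | .bfalse => ∅
  | .btrue => ∅
  | .var i => {i}
  | .bxor a b => a.vars ∪ b.vars
  | .band a b => a.vars ∪ b.vars

inductive Gate where
  | NOT (i : ℕ) : Gate
  | CNOT (i j : ℕ) : Gate
  | TOF (i j k : ℕ) : Gate

def applyGate : Gate → (ℕ → Bool) → (ℕ → Bool)
  | .NOT i, s => Function.update s i (! s i)
  | .CNOT i j, s => Function.update s j (xor (s i) (s j))
  | .TOF i j k, s => Function.update s k (xor (s i && s j) (s k))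

def evalCirc : List Gate → (ℕ → Bool) → (ℕ → Bool)
  | [], s => s
  | g :: C, s => evalCirc C (applyGate g s)

def Gate.target : Gate → ℕ
  | .NOT i => i
  | .CNOT _ j => j
  | .TOF _ _ k => k

def Gate.controls : Gate → Finset ℕ
  | .NOT _ => ∅
  | .CNOT i _ => {i}
  | .TOF i j _ => {i, j}

def Gate.wf : Gate → Prop
  | .NOT _ => True
  | .CNOT i j => i ≠ j
  | .TOF i j k => i ≠ j ∧ i ≠ k ∧ j ≠ k

def circWf (C : List Gate) : Prop := ∀ g ∈ C, g.wf

def mods (C : List Gate) : Finset ℕ := (C.map Gate.target).toFinset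

def controls (C : List Gate) : Finset ℕ := C.foldr (fun g A => g.controls ∪ A) ∅

def uncompute (C : List Gate) (A : Finset ℕ) : List Gate :=
  C.filter (fun g => g.target ∉ A)

/-- The ancilla heap is modeled as an infinite supply of available (zero-valued)
ancilla indices: `H n` is the `n`-th ancilla on the heap.  Popping the heap
returns `H 0` and the remaining heap `fun n => H (n+1)`. -/
def compileBExp : BExp → ℕ → (ℕ → ℕ) → List Gate × (ℕ → ℕ)
  | .bfalse, _, H => ([], H)
  | .btrue, i, H => ([.NOT i], H)
  | .var j, i, H => ([.CNOT j i], H)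
  | .bxor a b, i, H =>
    let r1 := compileBExp a i H
    let r2 := compileBExp b i r1.2
    (r1.1 ++ r2.1, r2.2)
  | .band a b, i, H =>
    let a1 := H 0
    let r1 := compileBExp a a1 (fun n => H (n+1))
    let a2 := r1.2 0
    let r2 := compileBExp b a2 (fun n => r1.2 (n+1))
    (r1.1 ++ r2.1 ++ [.TOF a1 a2 i], r2.2)

/-! Compiling `B` uses up exactly the first `B.ancillaCount` cells of the heap, and
every gate it emits targets either the output bit or one of those cells.  Injectivity
of the heap then separates the used cells from the ones still on the heap, and the
disjointness hypotheses separate both from the variables of `B`. -/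

def BExp.ancillaCount : BExp → ℕ
  | .bfalse | .btrue | .var _ => 0
  | .bxor a b => a.ancillaCount + b.ancillaCount
  | .band a b => a.ancillaCount + b.ancillaCount + 2

lemma compileBExp_snd (B : BExp) (i : ℕ) (H : ℕ → ℕ) :
    (compileBExp B i H).2 = fun n => H (n + B.ancillaCount) := by
  induction B generalizing i H with
  | bfalse | btrue | var => rfl
  | bxor a b iha ihb =>
    simp only [compileBExp, BExp.ancillaCount, ihb, iha, Nat.add_assoc,
      Nat.add_comm b.ancillaCount]
  | band a b iha ihb =>
    funext n
    simp only [compileBExp, BExp.ancillaCount, ihb, iha]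
    congr 1
    omega

lemma mods_append (C₁ C₂ : List Gate) : mods (C₁ ++ C₂) = mods C₁ ∪ mods C₂ := by
  simp [mods]

lemma applyGate_of_ne_target {g : Gate} {j : ℕ} (hj : j ≠ g.target) (s : ℕ → Bool) :
    applyGate g s j = s j := by
  cases g <;> exact Function.update_of_ne hj _ _

lemma evalCirc_apply_of_notMem_mods {C : List Gate} {j : ℕ} (hj : j ∉ mods C)
    (s : ℕ → Bool) : evalCirc C s j = s j := by
  induction C generalizing s with
  | nil => rfl
  | cons g C ih =>
    simp only [mods, List.map_cons, List.toFinset_cons, Finset.mem_insert, List.mem_toFinset,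
      not_or] at hj
    rw [evalCirc, ih (by simpa [mods] using hj.2)]
    exact applyGate_of_ne_target hj.1 s

lemma mods_compileBExp_subset (B : BExp) (i : ℕ) (H : ℕ → ℕ) :
    (↑(mods (compileBExp B i H).1) : Set ℕ) ⊆ insert i (H '' Set.Iio B.ancillaCount) := by
  induction B generalizing i H with
  | bfalse => simp [compileBExp, mods]
  | btrue | var => simp [compileBExp, mods, Gate.target]
  | bxor a b iha ihb =>
    simp only [compileBExp, mods_append, Finset.coe_union, Set.union_subset_iff,
      BExp.ancillaCount, compileBExp_snd]
    refine ⟨(iha i H).trans ?_, (ihb i _).trans ?_⟩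
    all_goals
      refine Set.insert_subset_insert ?_
      rintro _ ⟨n, hn, rfl⟩
      exact ⟨_, by simp only [Set.mem_Iio] at hn ⊢; omega, rfl⟩
  | band a b iha ihb =>
    simp only [compileBExp, mods_append, Finset.coe_union, Set.union_subset_iff,
      BExp.ancillaCount, compileBExp_snd]
    refine ⟨⟨(iha _ _).trans ?_, (ihb _ _).trans ?_⟩, by simp [mods, Gate.target]⟩
    all_goals
      rintro _ (rfl | ⟨n, hn, rfl⟩)
      · exact Or.inr ⟨_, by simp only [Set.mem_Iio]; omega, rfl⟩
      · exact Or.inr ⟨_, by simp only [Set.mem_Iio] at hn ⊢; omega, rfl⟩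

lemma image_Iio_subset_range_diff_range_add {H : ℕ → ℕ} (hH : Function.Injective H)
    (k : ℕ) : H '' Set.Iio k ⊆ Set.range H \ Set.range (fun n => H (n + k)) := by
  rintro _ ⟨m, hm, rfl⟩
  refine ⟨⟨m, rfl⟩, fun ⟨n, hn⟩ => ?_⟩
  have := hH hn
  simp only [Set.mem_Iio] at hm
  omega

theorem compile_mods (B : BExp) (i : ℕ) (H : ℕ → ℕ)
    (hinj : Function.Injective H)
    (hHB : ∀ n, H n ∉ B.vars) (hHi : ∀ n, H n ≠ i) (hiB : i ∉ B.vars) :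
    (↑(mods (compileBExp B i H).1) : Set ℕ) ⊆
      insert i (Set.range H \ Set.range (compileBExp B i H).2) ∧
    (∀ (s : ℕ → Bool) (j : ℕ),
      (j ∈ Set.range (compileBExp B i H).2 ∨ j ∈ B.vars) →
      evalCirc (compileBExp B i H).1 s j = s j) := by
  have hmods : (↑(mods (compileBExp B i H).1) : Set ℕ) ⊆
      insert i (Set.range H \ Set.range (compileBExp B i H).2) := by
    rw [compileBExp_snd]
    exact (mods_compileBExp_subset B i H).trans
      (Set.insert_subset_insert (image_Iio_subset_range_diff_range_add hinj _))
  refine ⟨hmods, fun s j hj => evalCirc_apply_of_notMem_mods (fun hmem => ?_) s⟩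
  rcases hmods hmem with rfl | ⟨⟨n, rfl⟩, hpopped⟩
  · rcases hj with ⟨m, hm⟩ | hvar
    · rw [compileBExp_snd] at hm
      exact hHi _ hm
    · exact hiB hvar
  · rcases hj with hheap | hvar
    · exact hpopped hheap
    · exact hHB n hvar
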